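/- Let γ : [0,1] → [0,1] be continuously differentiable with γ(0)=0, γ(1)=1, and γ(t) < 1 for t < 1. Given fixed x₁, μ, σ ∈ ℝ with σ > 0, define the probability path p_t = N(γ(t)·x₁ + (1-γ(t))·μ, (1-γ(t))²σ²). Then the vector field u_t(x) = γ'(t)·(x₁ - x)/(1 - γ(t)) generates this path: if X_t solves the ODE dX_t/dt = u_t(X_t) with X_0 ~ N(μ, σ²), then X_t ~ p_t for all t ∈ [0,1). -/

import Mathlib

open MeasureTheory ProbabilityTheory

theorem stmt2 (γ γ' : ℝ → ℝ)
    (hderiv : ∀ t, HasDerivAt γ (γ' t) t) (hcont : Continuous γ')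
    (h0 : γ 0 = 0) (h1 : γ 1 = 1) (hlt : ∀ t < (1:ℝ), γ t < 1)
    (x₁ μ : ℝ) (σ : NNReal) (hσ : 0 < σ) :
    ∀ t ∈ Set.Ico (0:ℝ) 1,
      (Measure.map (fun x₀ => γ t * x₁ + (1 - γ t) * x₀) (gaussianReal μ (σ ^ 2))
        = gaussianReal (γ t * x₁ + (1 - γ t) * μ) (Real.toNNReal ((1 - γ t) ^ 2) * σ ^ 2))
      ∧ ∀ x₀ : ℝ,
          HasDerivAt (fun s => γ s * x₁ + (1 - γ s) * x₀)
            (γ' t * (x₁ - (γ t * x₁ + (1 - γ t) * x₀)) / (1 - γ t)) t := by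
  intro t ht
  have hγt : γ t < 1 := hlt t ht.2
  have hne : (1 : ℝ) - γ t ≠ 0 := by linarith
  constructor
  · have hmap : Measure.map (fun x₀ : ℝ => (1 - γ t) * x₀) (gaussianReal μ (σ ^ 2))
        = gaussianReal ((1 - γ t) * μ) (⟨(1 - γ t)^2, sq_nonneg _⟩ * σ ^ 2) :=
      gaussianReal_map_const_mul (1 - γ t)
    have h2 : Measure.map (fun x : ℝ => γ t * x₁ + x)
        (gaussianReal ((1 - γ t) * μ) (⟨(1 - γ t)^2, sq_nonneg _⟩ * σ ^ 2))
        = gaussianReal ((1 - γ t) * μ + γ t * x₁) (⟨(1 - γ t)^2, sq_nonneg _⟩ * σ ^ 2) :=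
      gaussianReal_map_const_add (γ t * x₁)
    have hcomp : (fun x₀ : ℝ => γ t * x₁ + (1 - γ t) * x₀)
        = (fun x : ℝ => γ t * x₁ + x) ∘ (fun x₀ : ℝ => (1 - γ t) * x₀) := rfl
    rw [hcomp, ← Measure.map_map (by fun_prop) (by fun_prop), hmap, h2]
    congr 1
    · ring
    · congr 1
      ext
      simp [Real.toNNReal, max_eq_left (sq_nonneg (1 - γ t))]
      rfl
  · intro x₀
    have h := ((hderiv t).const_mul x₁).add
      ((((hderiv t).const_sub 1)).mul_const x₀)
    have heq : x₁ * γ' t + -γ' t * x₀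
        = γ' t * (x₁ - (γ t * x₁ + (1 - γ t) * x₀)) / (1 - γ t) := by
      field_simp
      ring
    simpa [mul_comm, Pi.add_def] using h.congr_deriv heq
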